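/- arXiv:2604.08724 — 5 statements merged into one kernel-verified Lean document; each statement's English description precedes it below -/
import Mathlib

section
/- For every subset A of a group G: cov_G(AA⁻¹) ≤ |G:A|₋ ≤ |G:A|₊, and |G:A|₊ = pack_G(A), where |G:A|₋ and |G:A|₊ are the left lower and left upper subindices of A in G. -/
/-! The direct products `B · A` are exactly the families `B` of pairwise disjoint left translates
`bA`, so by Zorn every packing extends to a left subfactor, which gives `|G:A|₊ = pack_G(A)`.
If `g ∉ B(AA⁻¹)` then `gA` misses every `bA` with `b ∈ B`, so maximality of a left subfactor `B`
forces `B(AA⁻¹) = G` once `A` is nonempty; for `A = ∅` the covering number is `sInf ∅ = 0`. -/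

open Pointwise

/-- The product `A * B` is direct. -/
def IsDirectProd {G : Type*} [Group G] (A B : Set G) : Prop :=
  ∀ a₁ ∈ A, ∀ b₁ ∈ B, ∀ a₂ ∈ A, ∀ b₂ ∈ B, a₁ * b₁ = a₂ * b₂ → a₁ = a₂ ∧ b₁ = b₂

/-- `B` is a left subfactor of `G` relative to `A`: `B` is inclusion-maximal
among subsets with `B * A` direct. -/
def IsLeftSubfactor {G : Type*} [Group G] (A B : Set G) : Prop :=
  IsDirectProd B A ∧ ∀ B' : Set G, B ⊆ B' → IsDirectProd B' A → B' = B

/-- The left upper subindex `|G:A|₊`. -/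
noncomputable def lUpperIndex {G : Type*} [Group G] (A : Set G) : Cardinal :=
  sSup {c | ∃ B : Set G, IsLeftSubfactor A B ∧ c = Cardinal.mk ↥B}

/-- The left lower subindex `|G:A|₋`. -/
noncomputable def lLowerIndex {G : Type*} [Group G] (A : Set G) : Cardinal :=
  sInf {c | ∃ B : Set G, IsLeftSubfactor A B ∧ c = Cardinal.mk ↥B}

/-- The (left) packing number of `A` in `G`: the supremum of cardinalities of sets of
pairwise-disjoint left translates of `A`. -/
noncomputable def packNumber {G : Type*} [Group G] (A : Set G) : Cardinal :=
  sSup {c | ∃ S : Set G,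
    (∀ x ∈ S, ∀ y ∈ S, x ≠ y → (x • A) ∩ (y • A) = ∅) ∧ c = Cardinal.mk ↥S}

/-- The (left) covering number of `D` in `G`. -/
noncomputable def covNumber {G : Type*} [Group G] (D : Set G) : Cardinal :=
  sInf {c | ∃ X : Set G, X * D = Set.univ ∧ c = Cardinal.mk ↥X}

lemma bddAbove_set_cards {α : Type*} {p : Set α → Prop} :
    BddAbove {c | ∃ B : Set α, p B ∧ c = Cardinal.mk B} :=
  ⟨Cardinal.mk α, by rintro _ ⟨B, -, rfl⟩; exact Cardinal.mk_set_le B⟩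

section Subfactor

variable {G : Type*} [Group G] {A B : Set G}

lemma isDirectProd_iff_smul_inter_eq_empty :
    IsDirectProd B A ↔ ∀ x ∈ B, ∀ y ∈ B, x ≠ y → x • A ∩ y • A = ∅ := by
  constructor
  · rintro h x hx y hy hxy
    refine Set.eq_empty_of_forall_notMem ?_
    rintro _ ⟨⟨a, ha, rfl⟩, ⟨a', ha', heq⟩⟩
    exact hxy (h x hx a ha y hy a' ha' heq.symm).1
  · intro h b₁ hb₁ a₁ ha₁ b₂ hb₂ a₂ ha₂ heq
    by_cases hb : b₁ = b₂
    · exact ⟨hb, mul_left_cancel (hb ▸ heq)⟩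
    · have hmem : b₁ * a₁ ∈ b₁ • A ∩ b₂ • A := ⟨⟨a₁, ha₁, rfl⟩, ⟨a₂, ha₂, heq.symm⟩⟩
      simp [h b₁ hb₁ b₂ hb₂ hb] at hmem

lemma isDirectProd_sUnion {c : Set (Set G)} (hc : ∀ B ∈ c, IsDirectProd B A)
    (hchain : IsChain (· ⊆ ·) c) : IsDirectProd (⋃₀ c) A := by
  rintro b₁ ⟨B₁, hB₁, hb₁⟩ a₁ ha₁ b₂ ⟨B₂, hB₂, hb₂⟩ a₂ ha₂ heq
  rcases hchain.total hB₁ hB₂ with h | h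
  · exact hc B₂ hB₂ b₁ (h hb₁) a₁ ha₁ b₂ hb₂ a₂ ha₂ heq
  · exact hc B₁ hB₁ b₁ hb₁ a₁ ha₁ b₂ (h hb₂) a₂ ha₂ heq

lemma exists_isLeftSubfactor_superset (hS : IsDirectProd B A) :
    ∃ B', B ⊆ B' ∧ IsLeftSubfactor A B' := by
  obtain ⟨B', hBB', hmax⟩ := zorn_subset_nonempty {B | IsDirectProd B A}
    (fun c hc hchain _ => ⟨⋃₀ c, isDirectProd_sUnion hc hchain,
      fun _ => Set.subset_sUnion_of_mem⟩) B hS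
  exact ⟨B', hBB', hmax.1, fun B'' hB'B'' hB'' => (hmax.2 hB'' hB'B'').antisymm hB'B''⟩

lemma IsDirectProd.insert (hB : IsDirectProd B A) {g : G} (hg : g ∉ B * (A * A⁻¹)) :
    IsDirectProd (insert g B) A := by
  have hfar : ∀ y ∈ B, g • A ∩ y • A = ∅ := by
    rintro y hy
    refine Set.eq_empty_of_forall_notMem ?_
    rintro _ ⟨⟨a₁, ha₁, rfl⟩, ⟨a₂, ha₂, hya⟩⟩
    refine hg ⟨y, hy, a₂ * a₁⁻¹, Set.mul_mem_mul ha₂ (Set.inv_mem_inv.mpr ha₁), ?_⟩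
    simp only [smul_eq_mul] at hya
    show y * (a₂ * a₁⁻¹) = g
    rw [← mul_assoc, hya, mul_inv_cancel_right]
  rw [isDirectProd_iff_smul_inter_eq_empty] at hB ⊢
  rintro x (rfl | hx) y (rfl | hy) hxy
  · exact absurd rfl hxy
  · exact hfar y hy
  · rw [Set.inter_comm]; exact hfar x hx
  · exact hB x hx y hy hxy

lemma IsLeftSubfactor.mul_mul_inv_eq_univ (hB : IsLeftSubfactor A B) (hA : A.Nonempty) :
    B * (A * A⁻¹) = Set.univ := by
  obtain ⟨a, ha⟩ := hA
  refine Set.eq_univ_of_forall fun g => by_contra fun hg => ?_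
  have hgB : g ∉ B := fun hgB =>
    hg ⟨g, hgB, a * a⁻¹, Set.mul_mem_mul ha (Set.inv_mem_inv.mpr ha), by simp⟩
  exact hgB (hB.2 _ (Set.subset_insert g B) (hB.1.insert hg) ▸ Set.mem_insert g B)

lemma nonempty_subfactor_cards :
    {c | ∃ B : Set G, IsLeftSubfactor A B ∧ c = Cardinal.mk B}.Nonempty := by
  obtain ⟨B, -, hB⟩ := exists_isLeftSubfactor_superset (A := A) (B := ∅) (by simp [IsDirectProd])
  exact ⟨_, B, hB, rfl⟩

lemma covNumber_mul_inv_le_lLowerIndex (A : Set G) : covNumber (A * A⁻¹) ≤ lLowerIndex A := by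
  rcases A.eq_empty_or_nonempty with rfl | hA
  · have hcov : covNumber ((∅ : Set G) * (∅ : Set G)⁻¹) = 0 := by
      simp [covNumber, Set.empty_ne_univ]
    exact hcov ▸ zero_le
  · refine le_csInf nonempty_subfactor_cards ?_
    rintro _ ⟨B, hB, rfl⟩
    exact csInf_le (OrderBot.bddBelow _) ⟨B, hB.mul_mul_inv_eq_univ hA, rfl⟩

lemma lLowerIndex_le_lUpperIndex (A : Set G) : lLowerIndex A ≤ lUpperIndex A :=
  csInf_le_csSup nonempty_subfactor_cards (OrderBot.bddBelow _) bddAbove_set_cards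

lemma lUpperIndex_eq_packNumber (A : Set G) : lUpperIndex A = packNumber A := by
  have hsub : {c | ∃ B : Set G, IsLeftSubfactor A B ∧ c = Cardinal.mk B} ⊆
      {c | ∃ S : Set G, (∀ x ∈ S, ∀ y ∈ S, x ≠ y → x • A ∩ y • A = ∅) ∧ c = Cardinal.mk S} := by
    rintro _ ⟨B, hB, rfl⟩
    exact ⟨B, isDirectProd_iff_smul_inter_eq_empty.mp hB.1, rfl⟩
  refine (csSup_le_csSup bddAbove_set_cards nonempty_subfactor_cards hsub).antisymm ?_
  refine csSup_le (nonempty_subfactor_cards.mono hsub) ?_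
  rintro _ ⟨S, hS, rfl⟩
  obtain ⟨B, hSB, hB⟩ :=
    exists_isLeftSubfactor_superset (isDirectProd_iff_smul_inter_eq_empty.mpr hS)
  exact (Cardinal.mk_le_mk_of_subset hSB).trans (le_csSup bddAbove_set_cards ⟨B, hB, rfl⟩)

end Subfactor

theorem stmt5 {G : Type*} [Group G] (A : Set G) :
    covNumber (A * A⁻¹) ≤ lLowerIndex A ∧
    lLowerIndex A ≤ lUpperIndex A ∧
    lUpperIndex A = packNumber A :=
  ⟨covNumber_mul_inv_le_lLowerIndex A, lLowerIndex_le_lUpperIndex A, lUpperIndex_eq_packNumber A⟩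
end

section
/- An infinite group G contains a right index stable subset with right index 2 (i.e., a subset A such that every right subfactor of G relative to A has exactly 2 elements) if and only if G contains an element x ≠ 1 whose order is not 3. -/
/-!
Write `D = A⁻¹ * A`. The product `A * B` is direct iff no quotient `b * c⁻¹` of distinct elements
of `B` lies in `D`, and such a `B` is maximal iff moreover every `g ∉ B` lies in `D * B`.

If every `x ≠ 1` has order 3, then for any `A` either `D ⊇ G \ {1}`, which makes `{1}` a
subfactor, or some `t ≠ 1` lies outside `D`; then so does `t⁻¹ = t²`, so `{1, t, t⁻¹}` is direct
with `A` and extends to a subfactor with at least three elements.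

Conversely, let `x ≠ 1` with `x³ ≠ 1`. A transfinite construction produces `A` with
`D = G \ {x, x⁻¹}`: enumerate `G \ {x, x⁻¹}` as `(gᵢ)` so that every initial segment has fewer
than `|G|` terms, and at step `i` add a pair `{a, a * gᵢ}`, with `a` outside the fewer than `|G|`
positions that would put `x` or `x⁻¹` into `D`. For this `A`, distinct elements of a subfactor `B`
have quotients in `{x, x⁻¹}`. Maximality gives `B` a second element, and a third one would make a
product of two elements of `{x, x⁻¹}` lie in `{x, x⁻¹}`, forcing `x = 1` or `x³ = 1`.
-/

open Pointwise

/-- `B` is a right subfactor of `G` relative to `A`. -/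
def IsRightSubfactor {G : Type*} [Group G] (A B : Set G) : Prop :=
  IsDirectProd A B ∧ ∀ B' : Set G, B ⊆ B' → IsDirectProd A B' → B' = B

open Cardinal Set

section DirectProduct

variable {G : Type*} [Group G] {A B : Set G}

theorem inv_mem_inv_mul_self {y : G} (hy : y ∈ A⁻¹ * A) : y⁻¹ ∈ A⁻¹ * A := by
  simpa [mul_inv_rev] using inv_mem_inv.2 hy

theorem isDirectProd_iff_pairwise :
    IsDirectProd A B ↔ B.Pairwise fun b c ↦ b * c⁻¹ ∉ A⁻¹ * A := by
  constructor
  · rintro h b hb c hc hbc ⟨a, ha, a', ha', hbc'⟩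
    obtain rfl : b = a * a' * c := by rw [show a * a' = b * c⁻¹ from hbc']; group
    exact hbc (h a⁻¹ ha _ hb a' ha' c hc (by group)).2
  · intro h a₁ ha₁ b₁ hb₁ a₂ ha₂ b₂ hb₂ he
    obtain rfl : b₁ = b₂ := by
      by_contra hne
      exact h hb₁ hb₂ hne
        ⟨a₁⁻¹, by simpa using ha₁, a₂, ha₂, by rw [← mul_inv_eq_iff_eq_mul.2 he]; group⟩
    exact ⟨mul_right_cancel he, rfl⟩

theorem isRightSubfactor_iff :
    IsRightSubfactor A B ↔ IsDirectProd A B ∧ ∀ g ∉ B, ∃ b ∈ B, g * b⁻¹ ∈ A⁻¹ * A := by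
  refine ⟨fun ⟨hd, hmax⟩ ↦ ⟨hd, fun g hg ↦ ?_⟩, fun ⟨hd, hcov⟩ ↦ ⟨hd, fun B' hBB' hd' ↦ ?_⟩⟩
  · by_contra! hgB
    have hd' : IsDirectProd A (insert g B) := isDirectProd_iff_pairwise.2 <|
      (isDirectProd_iff_pairwise.1 hd).insert_of_notMem hg fun b hb ↦
        ⟨hgB b hb, fun h ↦ hgB b hb (by simpa using inv_mem_inv_mul_self h)⟩
    exact hg (hmax _ (subset_insert g B) hd' ▸ mem_insert g B)
  · refine (subset_antisymm hBB' fun g hg ↦ ?_).symm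
    by_contra hgB
    obtain ⟨b, hb, hgb⟩ := hcov g hgB
    exact isDirectProd_iff_pairwise.1 hd' hg (hBB' hb) (ne_of_mem_of_not_mem hb hgB).symm hgb

theorem IsDirectProd.exists_isRightSubfactor_superset (h : IsDirectProd A B) :
    ∃ M, B ⊆ M ∧ IsRightSubfactor A M := by
  obtain ⟨M, hBM, hM⟩ := zorn_subset_nonempty {B : Set G | IsDirectProd A B}
    (fun c hc hchain _ ↦ ⟨⋃₀ c, isDirectProd_iff_pairwise.2 <|
      (pairwise_sUnion hchain.directedOn).2 fun s hs ↦ isDirectProd_iff_pairwise.1 (hc hs),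
      fun _ ↦ subset_sUnion_of_mem⟩) B h
  exact ⟨M, hBM, hM.1, fun B' hMB' hd' ↦ (hM.2 hd' hMB').antisymm hMB'⟩

theorem isRightSubfactor_singleton_one (h : ∀ g ≠ (1 : G), g ∈ A⁻¹ * A) :
    IsRightSubfactor A {1} :=
  isRightSubfactor_iff.2 ⟨isDirectProd_iff_pairwise.2 (pairwise_singleton _ _),
    fun g hg ↦ ⟨1, rfl, by simpa using h g hg⟩⟩

theorem isDirectProd_one_self_inv {t : G} (ht : t * t = t⁻¹) (htA : t ∉ A⁻¹ * A) :
    IsDirectProd A {1, t, t⁻¹} := by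
  have htA' : t⁻¹ ∉ A⁻¹ * A := fun h ↦ htA (by simpa using inv_mem_inv_mul_self h)
  have ht' : t⁻¹ * t⁻¹ = t := by rw [← mul_inv_rev, ht, inv_inv]
  refine isDirectProd_iff_pairwise.2 fun b hb c hc hbc ↦ ?_
  rcases hb with rfl | rfl | rfl <;> rcases hc with rfl | rfl | rfl <;>
    first | exact absurd rfl hbc | simpa [ht, ht']

theorem mul_notMem_pair {x : G} (hx1 : x ≠ 1) (hx3 : x ^ 3 ≠ 1) {y z : G}
    (hy : y ∈ ({x, x⁻¹} : Set G)) (hz : z ∈ ({x, x⁻¹} : Set G)) : y * z ∉ ({x, x⁻¹} : Set G) := by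
  have hxx : x * x ≠ x⁻¹ := fun h ↦ hx3 (by rw [pow_succ, pow_two, h, inv_mul_cancel])
  have hxx' : x⁻¹ * x⁻¹ ≠ x := fun h ↦ hxx (by rw [← inv_inj, mul_inv_rev, h, inv_inv])
  rcases hy with rfl | rfl <;> rcases hz with rfl | rfl <;> simp [hx1, hx1.symm, hxx, hxx']

end DirectProduct

theorem mk_mul_lt_of_lt {G : Type*} [Group G] [Infinite G] {s t : Set G} (hs : #s < #G)
    (ht : #t < #G) : #(s * t) < #G :=
  mk_mul_le.trans_lt (mul_lt_of_lt (aleph0_le_mk G) hs ht)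

universe u

namespace InvMulSelfEqCompl

variable {G : Type u} [Group G] {ι : Type u} [LinearOrder ι] [WellFoundedLT ι]
  (F : Set G) (e : ι → G)

/-- The points `a` outside `U * F * {1, (e i)⁻¹}`, where `U` is the union of the earlier pairs, are
those for which no `u⁻¹ * a` or `u⁻¹ * (a * e i)` with `u ∈ U` lies in `F`. -/
noncomputable def seed : ι → G :=
  wellFounded_lt.fix fun i s ↦ Classical.epsilon fun a ↦
    a ∉ (⋃ (j) (hj : j ∈ Iio i), ({s j hj, s j hj * e j} : Set G)) * F * {1, (e i)⁻¹}

def seedPair (i : ι) : Set G := {seed F e i, seed F e i * e i}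

theorem seed_eq (i : ι) : seed F e i = Classical.epsilon fun a ↦
    a ∉ (⋃ j ∈ Iio i, seedPair F e j) * F * {1, (e i)⁻¹} :=
  wellFounded_lt.fix_eq _ _

variable {F e}

theorem mk_biUnion_seedPair_lt [Infinite G] (hsmall : ∀ i : ι, #(Iio i) < #G) (i : ι) :
    #(⋃ j ∈ Iio i, seedPair F e j) < #G := by
  have hG := aleph0_le_mk G
  have hpair : ∀ j : Iio i, #(seedPair F e j) ≤ 2 := fun j ↦
    mk_insert_le.trans (by rw [mk_singleton, one_add_one_eq_two])
  calc #(⋃ j ∈ Iio i, seedPair F e j) ≤ #(Iio i) * ⨆ j : Iio i, #(seedPair F e j) :=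
        mk_biUnion_le _ _
    _ ≤ #(Iio i) * 2 := by gcongr; exact ciSup_le' hpair
    _ < #G := mul_lt_of_lt hG (hsmall i) (ofNat_lt_aleph0.trans_le hG)

theorem seed_notMem [Infinite G] (hF : #F < #G) (hsmall : ∀ i : ι, #(Iio i) < #G) (i : ι) :
    seed F e i ∉ (⋃ j ∈ Iio i, seedPair F e j) * F * {1, (e i)⁻¹} := by
  set W : Set G := (⋃ j ∈ Iio i, seedPair F e j) * F * {1, (e i)⁻¹}
  have hW : #W < #G := mk_mul_lt_of_lt (mk_mul_lt_of_lt (mk_biUnion_seedPair_lt hsmall i) hF)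
    ((toFinite _).lt_aleph0.trans_le (aleph0_le_mk G))
  obtain ⟨a, ha⟩ : Wᶜ.Nonempty := nonempty_compl.2 fun h ↦ by simp [h] at hW
  rw [seed_eq]
  exact Classical.epsilon_spec (p := fun a ↦ a ∉ _) ⟨a, ha⟩

theorem inv_mul_notMem_of_lt [Infinite G] (hF : #F < #G) (hsmall : ∀ i : ι, #(Iio i) < #G)
    {i j : ι} (hij : i < j) {y z : G} (hy : y ∈ seedPair F e i) (hz : z ∈ seedPair F e j) :
    y⁻¹ * z ∉ F := by
  intro hyz
  apply seed_notMem hF hsmall j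
  have hyU : y ∈ ⋃ k ∈ Iio j, seedPair F e k := mem_biUnion hij hy
  rcases hz with rfl | rfl
  · exact ⟨_, mul_mem_mul hyU hyz, 1, by simp, by group⟩
  · exact ⟨_, mul_mem_mul hyU hyz, (e j)⁻¹, by simp, by group⟩

theorem inv_mul_notMem_seedPair [Infinite G] (hF1 : 1 ∉ F) (hFinv : F⁻¹ = F)
    (hF : #F < #G) (he : range e ⊆ Fᶜ) (hsmall : ∀ i : ι, #(Iio i) < #G)
    {i j : ι} {y z : G} (hy : y ∈ seedPair F e i) (hz : z ∈ seedPair F e j) :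
    y⁻¹ * z ∉ F := by
  rcases lt_trichotomy i j with hij | rfl | hji
  · exact inv_mul_notMem_of_lt hF hsmall hij hy hz
  · have hei : e i ∉ F := he (mem_range_self i)
    have hei' : (e i)⁻¹ ∉ F := by rwa [← hFinv, inv_mem_inv]
    rcases hy with rfl | rfl <;> rcases hz with rfl | rfl <;> simpa [mul_assoc]
  · intro h
    apply inv_mul_notMem_of_lt hF hsmall hji hz hy
    rw [← hFinv]
    simpa using h

theorem exists_inv_mul_self_eq_compl_of_enum [Infinite G] (hF1 : 1 ∉ F) (hFinv : F⁻¹ = F)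
    (hF : #F < #G) (he : range e = Fᶜ) (hsmall : ∀ i : ι, #(Iio i) < #G) :
    ∃ A : Set G, A⁻¹ * A = Fᶜ := by
  refine ⟨⋃ i, seedPair F e i, Subset.antisymm ?_ ?_⟩
  · rintro _ ⟨y, hy, z, hz, rfl⟩
    rw [mem_inv] at hy
    obtain ⟨i, hi⟩ := mem_iUnion.1 hy
    obtain ⟨j, hj⟩ := mem_iUnion.1 hz
    simpa using inv_mul_notMem_seedPair hF1 hFinv hF he.subset hsmall hi hj
  · intro g hg
    obtain ⟨i, rfl⟩ := he ▸ hg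
    exact ⟨(seed F e i)⁻¹, by simpa using mem_iUnion_of_mem i (mem_insert _ _), _,
      mem_iUnion_of_mem i (mem_insert_of_mem _ rfl), inv_mul_cancel_left _ _⟩

end InvMulSelfEqCompl

open InvMulSelfEqCompl

theorem exists_inv_mul_self_eq_compl {G : Type u} [Group G] [Infinite G] {F : Set G}
    (hF1 : 1 ∉ F) (hFinv : F⁻¹ = F) (hF : #F < #G) : ∃ A : Set G, A⁻¹ * A = Fᶜ := by
  obtain ⟨e⟩ : Nonempty ((#G).ord.ToType ≃ ↥Fᶜ) :=
    Cardinal.eq.1 (by rw [mk_ord_toType, mk_compl_of_infinite F hF])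
  refine exists_inv_mul_self_eq_compl_of_enum hF1 hFinv hF (e := (↑) ∘ e) ?_ fun i ↦ ?_
  · rw [range_comp, e.range_eq_univ, image_univ, Subtype.range_coe]
  · simpa using mk_Iio_lt i (by simp)

theorem exists_isRightSubfactor_mk_ne_two {G : Type*} [Group G]
    (h3 : ∀ x : G, x ≠ 1 → orderOf x = 3) (A : Set G) :
    ∃ B, IsRightSubfactor A B ∧ #B ≠ 2 := by
  by_cases hA : ∀ g ≠ (1 : G), g ∈ A⁻¹ * A
  · exact ⟨{1}, isRightSubfactor_singleton_one hA, by simp⟩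
  push Not at hA
  obtain ⟨t, ht1, htA⟩ := hA
  have ht3 : t ^ 3 = 1 := h3 t ht1 ▸ pow_orderOf_eq_one t
  have ht : t * t = t⁻¹ := eq_inv_of_mul_eq_one_left ((pow_three' t).symm.trans ht3)
  have htt : t ≠ t⁻¹ := fun h ↦ ht1 (by simpa [← h] using ht)
  have hcard : 2 < #({1, t, t⁻¹} : Set G) := by
    rw [mk_insert (by simp [ht1, ht1.symm]), mk_insert (by simpa using htt), mk_singleton]
    norm_num
  obtain ⟨B, hsub, hB⟩ := (isDirectProd_one_self_inv ht htA).exists_isRightSubfactor_superset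
  exact ⟨B, hB, (hcard.trans_le (mk_le_mk_of_subset hsub)).ne'⟩

theorem mk_eq_two_of_isRightSubfactor {G : Type*} [Group G] {A B : Set G} {x : G}
    (hA : A⁻¹ * A = {x, x⁻¹}ᶜ) (hx1 : x ≠ 1) (hx3 : x ^ 3 ≠ 1) (hB : IsRightSubfactor A B) :
    #B = 2 := by
  obtain ⟨hd, hcov⟩ := isRightSubfactor_iff.1 hB
  rw [isDirectProd_iff_pairwise, hA] at hd
  simp only [mem_compl_iff, not_not] at hd
  rw [hA] at hcov
  obtain ⟨b, hb⟩ : B.Nonempty := by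
    by_contra hempty
    obtain ⟨b, hb, -⟩ := hcov 1 fun h ↦ hempty ⟨1, h⟩
    exact hempty ⟨b, hb⟩
  obtain ⟨c, hc, hcb⟩ : ∃ c ∈ B, c ≠ b := by
    by_contra! hsingle
    obtain ⟨c, hc, hxc⟩ := hcov (x * b) fun h ↦ hx1 (by simpa using hsingle _ h)
    simp [hsingle c hc] at hxc
  rw [mk_eq_two_iff' (⟨b, hb⟩ : B)]
  refine ⟨⟨c, hc⟩, by simpa using hcb, fun ⟨d, hdB⟩ hdb ↦ ?_⟩
  by_contra hdc
  simp only [ne_eq, Subtype.mk.injEq] at hdb hdc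
  exact mul_notMem_pair hx1 hx3 (hd hdB hc hdc) (hd hc hb hcb)
    (by simpa [mul_assoc] using hd hdB hb hdb)

theorem stmt9 {G : Type*} [Group G] [Infinite G] :
    (∃ A : Set G, ∀ B : Set G, IsRightSubfactor A B → Cardinal.mk ↥B = 2) ↔
    ∃ x : G, x ≠ 1 ∧ orderOf x ≠ 3 := by
  constructor
  · rintro ⟨A, hA⟩
    by_contra! h3
    obtain ⟨B, hB, hB2⟩ := exists_isRightSubfactor_mk_ne_two h3 A
    exact hB2 (hA B hB)
  · rintro ⟨x, hx1, hx3⟩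
    have hx3' : x ^ 3 ≠ 1 := fun h ↦ hx3 (orderOf_eq_prime h hx1)
    obtain ⟨A, hA⟩ := exists_inv_mul_self_eq_compl (F := {x, x⁻¹}) (by simp [hx1, hx1.symm])
      (by rw [inv_insert, inv_singleton, inv_inv, pair_comm])
      ((toFinite _).lt_aleph0.trans_le (aleph0_le_mk G))
    exact ⟨A, fun B hB ↦ mk_eq_two_of_isRightSubfactor hA hx1 hx3' hB⟩
end

section
/- Let {G_i}_{i∈I} be a family of groups. If every subset of the direct product ∏_{i∈I} G_i is right index stable, then for each i ∈ I every subset of G_i is right index stable. -/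
open Pointwise

universe u

/-- The right upper subindex `|G:A|⁺`. -/
noncomputable def rUpperIndex {G : Type*} [Group G] (A : Set G) : Cardinal :=
  sSup {c | ∃ B : Set G, IsRightSubfactor A B ∧ c = Cardinal.mk ↥B}

/-- The right lower subindex `|G:A|⁻`. -/
noncomputable def rLowerIndex {G : Type*} [Group G] (A : Set G) : Cardinal :=
  sInf {c | ∃ B : Set G, IsRightSubfactor A B ∧ c = Cardinal.mk ↥B}

/-- `A` is right index stable in `G`. -/
def RightIndexStable {G : Type*} [Group G] (A : Set G) : Prop :=
  rUpperIndex A = rLowerIndex A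

/-!
A surjection `φ : H →* G` with a set-theoretic section `s` transports right subfactors: if `B` is
a right subfactor of `G` relative to a nonempty `A`, then `s '' B` is one of `H` relative to
`φ ⁻¹' A`. Hence the cardinalities of right subfactors relative to `A` form a subset of those
relative to `φ ⁻¹' A`, and if the latter set has its supremum equal to its infimum, so does the
former. The projection `∏ G_j → G_i` with the section `Pi.mulSingle i` is such a surjection; the
empty set, whose only right subfactor is the whole group, is stable in any group.
-/

section RightSubfactorCards

variable {G : Type u} [Group G]

def rightSubfactorCards (A : Set G) : Set Cardinal.{u} :=
  {c | ∃ B : Set G, IsRightSubfactor A B ∧ c = Cardinal.mk ↥B}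

theorem exists_isRightSubfactor (A : Set G) : ∃ B : Set G, IsRightSubfactor A B := by
  obtain ⟨M, hM⟩ := zorn_subset {B : Set G | IsDirectProd A B} (by
    intro c hc hchain
    refine ⟨⋃₀ c, ?_, fun s hs => Set.subset_sUnion_of_mem hs⟩
    rintro a₁ ha₁ b₁ ⟨B₁, hB₁, hb₁⟩ a₂ ha₂ b₂ ⟨B₂, hB₂, hb₂⟩ heq
    rcases hchain.total hB₁ hB₂ with hle | hle
    · exact hc hB₂ a₁ ha₁ b₁ (hle hb₁) a₂ ha₂ b₂ hb₂ heq
    · exact hc hB₁ a₁ ha₁ b₁ hb₁ a₂ ha₂ b₂ (hle hb₂) heq)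
  exact ⟨M, hM.prop, fun B' hsub hdir => subset_antisymm (hM.2 hdir hsub) hsub⟩

theorem rightSubfactorCards_nonempty (A : Set G) : (rightSubfactorCards A).Nonempty :=
  let ⟨B, hB⟩ := exists_isRightSubfactor A
  ⟨_, B, hB, rfl⟩

theorem bddAbove_rightSubfactorCards (A : Set G) : BddAbove (rightSubfactorCards A) :=
  ⟨Cardinal.mk G, by rintro _ ⟨B, -, rfl⟩; exact Cardinal.mk_set_le B⟩

theorem isRightSubfactor_empty_iff {B : Set G} : IsRightSubfactor ∅ B ↔ B = Set.univ := by
  have hdirect : ∀ B' : Set G, IsDirectProd ∅ B' := fun _ a ha => absurd ha (Set.notMem_empty a)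
  refine ⟨fun hB => (hB.2 _ (Set.subset_univ B) (hdirect _)).symm, ?_⟩
  rintro rfl
  exact ⟨hdirect _, fun B' hsub _ => Set.eq_univ_of_univ_subset hsub⟩

theorem rightIndexStable_empty : RightIndexStable (∅ : Set G) := by
  have hcards : rightSubfactorCards (∅ : Set G) = {Cardinal.mk (Set.univ : Set G)} := by
    ext c
    simp only [rightSubfactorCards, isRightSubfactor_empty_iff, exists_eq_left,
      Set.mem_ofPred_eq, Set.mem_singleton_iff]
  change sSup (rightSubfactorCards _) = sInf (rightSubfactorCards _)
  rw [hcards, csSup_singleton, csInf_singleton]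

theorem RightIndexStable.of_rightSubfactorCards_subset {H : Type u} [Group H] {A : Set G}
    {A' : Set H} (hA' : RightIndexStable A')
    (hsub : rightSubfactorCards A ⊆ rightSubfactorCards A') : RightIndexStable A := by
  change sSup (rightSubfactorCards A) = sInf (rightSubfactorCards A)
  have hne := rightSubfactorCards_nonempty A
  refine le_antisymm ?_ (csInf_le_csSup hne (OrderBot.bddBelow _) (bddAbove_rightSubfactorCards A))
  calc sSup (rightSubfactorCards A)
      ≤ sSup (rightSubfactorCards A') :=
        csSup_le_csSup (bddAbove_rightSubfactorCards A') hne hsub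
    _ = sInf (rightSubfactorCards A') := hA'
    _ ≤ sInf (rightSubfactorCards A) := csInf_le_csInf (OrderBot.bddBelow _) hne hsub

end RightSubfactorCards

section Preimage

variable {G H : Type u} [Group G] [Group H] (φ : H →* G) {A : Set G}

theorem IsDirectProd.preimage_image {s : G → H} (hs : Function.RightInverse s φ) {B : Set G}
    (hB : IsDirectProd A B) : IsDirectProd (φ ⁻¹' A) (s '' B) := by
  rintro a₁ ha₁ _ ⟨b₁, hb₁, rfl⟩ a₂ ha₂ _ ⟨b₂, hb₂, rfl⟩ heq
  have hproj : φ a₁ * b₁ = φ a₂ * b₂ := by simpa only [map_mul, hs _] using congrArg φ heq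
  obtain ⟨-, rfl⟩ := hB _ ha₁ _ hb₁ _ ha₂ _ hb₂ hproj
  exact ⟨mul_right_cancel heq, rfl⟩

/-- Two elements of `B'` with the same image differ by a kernel element, which can be absorbed
into the `φ`-saturated factor. -/
theorem IsDirectProd.injOn_of_preimage {B' : Set H} (hA : (φ ⁻¹' A).Nonempty)
    (hB' : IsDirectProd (φ ⁻¹' A) B') : Set.InjOn φ B' := by
  obtain ⟨a, ha⟩ := hA
  intro g₁ hg₁ g₂ hg₂ hg
  have ha' : a * g₂ * g₁⁻¹ ∈ φ ⁻¹' A := by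
    simpa only [Set.mem_preimage, map_mul, map_inv, hg, mul_inv_cancel_right] using ha
  exact (hB' _ ha' g₁ hg₁ a ha g₂ hg₂ (by group)).2

theorem IsDirectProd.image_of_preimage (hφ : Function.Surjective φ) {B' : Set H}
    (hB' : IsDirectProd (φ ⁻¹' A) B') : IsDirectProd A (φ '' B') := by
  rintro a₁ ha₁ _ ⟨g₁, hg₁, rfl⟩ a₂ ha₂ _ ⟨g₂, hg₂, rfl⟩ heq
  obtain ⟨x₂, rfl⟩ := hφ a₂
  have hx₁ : φ (x₂ * g₂ * g₁⁻¹) = a₁ := by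
    rw [map_mul, map_mul, map_inv, ← heq, mul_inv_cancel_right]
  obtain ⟨hx, rfl⟩ := hB' _ (show _ ∈ φ ⁻¹' A from hx₁ ▸ ha₁) g₁ hg₁ x₂ ha₂ g₂ hg₂ (by group)
  exact ⟨hx₁ ▸ congrArg φ hx, rfl⟩

theorem IsRightSubfactor.preimage_image {s : G → H} (hs : Function.RightInverse s φ)
    (hA : A.Nonempty) {B : Set G} (hB : IsRightSubfactor A B) :
    IsRightSubfactor (φ ⁻¹' A) (s '' B) := by
  refine ⟨hB.1.preimage_image φ hs, fun B' hsub hB' => ?_⟩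
  have hφB : φ '' (s '' B) = B := by
    simp only [Set.image_image, hs _, Set.image_id']
  have hproj : φ '' B' = B :=
    hB.2 _ (hφB ▸ Set.image_mono hsub) (hB'.image_of_preimage φ hs.surjective)
  obtain ⟨a, ha⟩ := hA
  have hinj : Set.InjOn φ B' :=
    hB'.injOn_of_preimage φ ⟨s a, show φ (s a) ∈ A from (hs a).symm ▸ ha⟩
  refine subset_antisymm (fun g hg => ?_) hsub
  have hφg : φ g ∈ B := hproj ▸ Set.mem_image_of_mem φ hg
  exact ⟨φ g, hφg, hinj (hsub ⟨_, hφg, rfl⟩) hg (hs _)⟩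

theorem rightSubfactorCards_subset_preimage (hφ : Function.Surjective φ) (hA : A.Nonempty) :
    rightSubfactorCards A ⊆ rightSubfactorCards (φ ⁻¹' A) := by
  rintro _ ⟨B, hB, rfl⟩
  have hs := Function.rightInverse_surjInv hφ
  exact ⟨_, hB.preimage_image φ hs hA, (Cardinal.mk_image_eq hs.injective).symm⟩

theorem RightIndexStable.of_preimage (hφ : Function.Surjective φ)
    (hA : RightIndexStable (φ ⁻¹' A)) : RightIndexStable A := by
  rcases A.eq_empty_or_nonempty with rfl | hne
  · exact rightIndexStable_empty
  · exact hA.of_rightSubfactorCards_subset (rightSubfactorCards_subset_preimage φ hφ hne)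

end Preimage

theorem stmt11 {ι : Type u} (G : ι → Type u) [∀ i, Group (G i)]
    (h : ∀ A : Set (∀ i, G i), RightIndexStable A) :
    ∀ i : ι, ∀ A : Set (G i), RightIndexStable A := by
  classical
  intro i A
  have hsection : Function.RightInverse (Pi.mulSingle i) (Pi.evalMonoidHom G i) :=
    Pi.mulSingle_eq_same i
  exact RightIndexStable.of_preimage _ hsection.surjective (h _)
end

section
/- For an integer n₀ ≥ 0 let S_{n₀} = {m² : m ∈ ℤ, m ≥ n₀} in the additive group ℤ. Then ℤ ∖ (S_{n₀} − S_{n₀}) equals 4ℤ + 2 if n₀ = 0, and equals (4ℤ + 2) ∪ {±1, ±3, …, ±(2n₀−1)} ∪ {±4, ±8, …, ±4n₀} if n₀ > 0. Moreover, S_0 = {0, 1, 4, 9, …} is index stable in ℤ with index 2, while S_1 = {1, 4, 9, …} is not index stable and satisfies |ℤ:S_1|⁻ = 3 and |ℤ:S_1|⁺ = 4. -/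
open Pointwise

/-- The sum `A + B` is direct. -/
def IsDirectSum (A B : Set ℤ) : Prop :=
  ∀ a₁ ∈ A, ∀ b₁ ∈ B, ∀ a₂ ∈ A, ∀ b₂ ∈ B, a₁ + b₁ = a₂ + b₂ → a₁ = a₂ ∧ b₁ = b₂

/-- `B` is a subfactor of `(ℤ,+)` relative to `A`. -/
def IsSubfactor (A B : Set ℤ) : Prop :=
  IsDirectSum A B ∧ ∀ B' : Set ℤ, B ⊆ B' → IsDirectSum A B' → B' = B

/-- The upper subindex `|ℤ:A|⁺`. -/
noncomputable def upperIndex (A : Set ℤ) : Cardinal :=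
  sSup {c | ∃ B : Set ℤ, IsSubfactor A B ∧ c = Cardinal.mk ↥B}

/-- The lower subindex `|ℤ:A|⁻`. -/
noncomputable def lowerIndex (A : Set ℤ) : Cardinal :=
  sInf {c | ∃ B : Set ℤ, IsSubfactor A B ∧ c = Cardinal.mk ↥B}

/-- `S n₀ = {m² : m ∈ ℤ, m ≥ n₀}`. -/
def Squares (n₀ : ℕ) : Set ℤ := {x : ℤ | ∃ m : ℤ, (n₀ : ℤ) ≤ m ∧ x = m ^ 2}

/-!
The difference set of `S n₀` consists of the numbers `(m - k) * (m + k)` with `m, k ≥ n₀`; the two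
factors have the same parity, so apart from `0` these are the odd `x` with `|x| ≥ 2 n₀ + 1` and the
multiples of `4` with `|x| ≥ 4 n₀ + 4`, realised as `(t + 1)² - t²` and `(j + 1)² - (j - 1)²`.
A set `B` makes `A + B` direct exactly when no two distinct elements of `B` differ by an element
of `A - A`. For `A = S 0` all nonzero differences in `B` are then `≡ 2 (mod 4)`, which allows at
most two elements, and maximality forces two. For `A = S 1` the differences `±1, ±4` become
available as well: five increasing integers can never have all pairwise gaps of that kind, while
every such `B` with at most two elements can still be enlarged, and `{0, 1, 2}`, `{0, 2, 4, 6}`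
are maximal.
-/

section Subfactor

variable {A B : Set ℤ}

theorem isDirectSum_iff :
    IsDirectSum A B ↔ ∀ b₁ ∈ B, ∀ b₂ ∈ B, b₁ - b₂ ∈ A - A → b₁ = b₂ := by
  constructor
  · rintro hAB b₁ hb₁ b₂ hb₂ ⟨p, hp, q, hq, hpq⟩
    exact ((hAB p hp b₂ hb₂ q hq b₁ hb₁ (by simp only at hpq; omega)).2).symm
  · intro hB a₁ ha₁ b₁ hb₁ a₂ ha₂ b₂ hb₂ h
    have hb : b₁ = b₂ := hB b₁ hb₁ b₂ hb₂ ⟨a₂, ha₂, a₁, ha₁, by simp only; omega⟩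
    exact ⟨by omega, hb⟩

theorem isSubfactor_iff :
    IsSubfactor A B ↔
      IsDirectSum A B ∧ ∀ x, (∀ b ∈ B, x - b ∈ A - A → x = b) → x ∈ B := by
  refine and_congr_right fun hAB => ⟨fun hmax x hx => ?_, fun hmax B' hBB' hAB' => ?_⟩
  · have hAxB : IsDirectSum A (insert x B) := by
      rw [isDirectSum_iff] at hAB ⊢
      have hx' : ∀ b ∈ B, b - x ∈ A - A → b = x := fun b hb ⟨p, hp, q, hq, hpq⟩ =>
        (hx b hb ⟨q, hq, p, hp, by simp only at hpq ⊢; omega⟩).symm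
      rintro b₁ (rfl | hb₁) b₂ (rfl | hb₂)
      exacts [fun _ => rfl, hx b₂ hb₂, hx' b₁ hb₁, hAB b₁ hb₁ b₂ hb₂]
    exact hmax _ (Set.subset_insert x B) hAxB ▸ Set.mem_insert x B
  · rw [isDirectSum_iff] at hAB'
    exact hBB'.antisymm' fun x hx => hmax x fun b hb => hAB' x hx b (hBB' hb)

theorem IsSubfactor.nonempty (h : IsSubfactor A B) : B.Nonempty := by
  by_contra hB
  rw [Set.not_nonempty_iff_eq_empty] at hB
  subst hB
  exact (isSubfactor_iff.1 h).2 0 (by simp)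

end Subfactor

theorem sq_mem_squares {n₀ : ℕ} {m : ℤ} (h : (n₀ : ℤ) ≤ |m|) : m ^ 2 ∈ Squares n₀ :=
  ⟨|m|, h, (sq_abs m).symm⟩

theorem mem_sub_squares_iff (n₀ : ℕ) (x : ℤ) :
    x ∈ Squares n₀ - Squares n₀ ↔
      x = 0 ∨ (Odd x ∧ 2 * n₀ + 1 ≤ |x|) ∨ (4 ∣ x ∧ 4 * n₀ + 4 ≤ |x|) := by
  rw [Set.mem_sub]
  constructor
  · rintro ⟨_, ⟨m, hm, rfl⟩, _, ⟨k, hk, rfl⟩, rfl⟩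
    rcases eq_or_ne m k with rfl | hmk
    · exact Or.inl (sub_self _)
    have hfac : m ^ 2 - k ^ 2 = (m - k) * (m + k) := by ring
    have habs : |m ^ 2 - k ^ 2| = |m - k| * (m + k) := by
      rw [hfac, abs_mul, abs_of_pos (by omega : 0 < m + k)]
    rw [habs, hfac]
    rcases Int.even_or_odd (m - k) with ⟨u, hu⟩ | ⟨u, hu⟩
    · have h2 : (2 : ℤ) ∣ m - k := ⟨u, by omega⟩
      have h2' : (2 : ℤ) ∣ m + k := ⟨u + k, by omega⟩
      have hdiff : 2 ≤ |m - k| := by rw [le_abs']; omega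
      have hsum : 2 * (n₀ : ℤ) + 2 ≤ m + k := by omega
      refine Or.inr (Or.inr ⟨mul_dvd_mul h2 h2', ?_⟩)
      calc 4 * (n₀ : ℤ) + 4 = 2 * (2 * n₀ + 2) := by ring
        _ ≤ |m - k| * (m + k) := mul_le_mul hdiff hsum (by positivity) (abs_nonneg _)
    · have hodd : Odd (m + k) := ⟨u + k, by omega⟩
      have hdiff : 1 ≤ |m - k| := by rw [le_abs']; omega
      have hsum : 2 * (n₀ : ℤ) + 1 ≤ m + k := by omega
      exact Or.inr (Or.inl ⟨Int.odd_mul.2 ⟨⟨u, hu⟩, hodd⟩,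
        hsum.trans (le_mul_of_one_le_left (by omega) hdiff)⟩)
  · rintro (rfl | ⟨⟨t, rfl⟩, hx⟩ | ⟨⟨j, rfl⟩, hx⟩)
    · exact ⟨(n₀ : ℤ) ^ 2, ⟨n₀, le_rfl, rfl⟩, (n₀ : ℤ) ^ 2, ⟨n₀, le_rfl, rfl⟩, sub_self _⟩
    · refine ⟨(t + 1) ^ 2, sq_mem_squares ?_, t ^ 2, sq_mem_squares ?_, by ring⟩ <;>
        rw [le_abs'] at hx ⊢ <;> omega
    · refine ⟨(j + 1) ^ 2, sq_mem_squares ?_, (j - 1) ^ 2, sq_mem_squares ?_, by ring⟩ <;>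
        rw [le_abs'] at hx ⊢ <;> omega

theorem compl_sub_squares_zero :
    (Squares 0 - Squares 0)ᶜ = {x : ℤ | ∃ k : ℤ, x = 4 * k + 2} := by
  ext x
  simp only [Set.mem_compl_iff, Set.mem_ofPred_eq, mem_sub_squares_iff, Int.odd_iff,
    Int.dvd_iff_emod_eq_zero, le_abs', Nat.cast_zero]
  exact ⟨fun h => ⟨x / 4, by omega⟩, by rintro ⟨k, rfl⟩; omega⟩

theorem compl_sub_squares (n₀ : ℕ) :
    (Squares n₀ - Squares n₀)ᶜ =
      {x : ℤ | ∃ k : ℤ, x = 4 * k + 2} ∪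
      {x : ℤ | ∃ j : ℤ, 1 ≤ j ∧ j ≤ (n₀ : ℤ) ∧ (x = 2 * j - 1 ∨ x = -(2 * j - 1))} ∪
      {x : ℤ | ∃ j : ℤ, 1 ≤ j ∧ j ≤ (n₀ : ℤ) ∧ (x = 4 * j ∨ x = -(4 * j))} := by
  ext x
  simp only [Set.mem_compl_iff, Set.mem_union, Set.mem_ofPred_eq, mem_sub_squares_iff,
    Int.odd_iff, Int.dvd_iff_emod_eq_zero, le_abs']
  constructor
  · intro h
    by_cases hx2 : x % 4 = 2
    · exact Or.inl (Or.inl ⟨(x - 2) / 4, by omega⟩)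
    by_cases hodd : x % 2 = 1
    · rcases le_or_gt 0 x with hx | hx
      · exact Or.inl (Or.inr ⟨(x + 1) / 2, by omega, by omega, Or.inl (by omega)⟩)
      · exact Or.inl (Or.inr ⟨(1 - x) / 2, by omega, by omega, Or.inr (by omega)⟩)
    · rcases le_or_gt 0 x with hx | hx
      · exact Or.inr ⟨x / 4, by omega, by omega, Or.inl (by omega)⟩
      · exact Or.inr ⟨-x / 4, by omega, by omega, Or.inr (by omega)⟩
  · rintro ((⟨k, rfl⟩ | ⟨j, h1, h2, rfl | rfl⟩) | ⟨j, h1, h2, rfl | rfl⟩) <;> omega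

theorem mem_sub_squares_zero_iff {x : ℤ} : x ∈ Squares 0 - Squares 0 ↔ x % 4 ≠ 2 := by
  rw [← not_iff_not, ← Set.mem_compl_iff, compl_sub_squares_zero]
  exact ⟨fun ⟨k, hk⟩ => by omega, fun h => by simpa using ⟨(x - 2) / 4, by omega⟩⟩

theorem mem_sub_squares_one_iff {x : ℤ} :
    x ∈ Squares 1 - Squares 1 ↔ x % 4 ≠ 2 ∧ x ≠ 1 ∧ x ≠ -1 ∧ x ≠ 4 ∧ x ≠ -4 := by
  simp only [mem_sub_squares_iff, Int.odd_iff, Int.dvd_iff_emod_eq_zero, le_abs',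
    Nat.cast_one]
  omega

theorem mk_eq_two_of_isSubfactor_squares_zero {B : Set ℤ} (hB : IsSubfactor (Squares 0) B) :
    Cardinal.mk B = 2 := by
  obtain ⟨hdirect, hmax⟩ := isSubfactor_iff.1 hB
  simp only [isDirectSum_iff, mem_sub_squares_zero_iff] at hdirect hmax
  obtain ⟨a, ha⟩ := hB.nonempty
  obtain ⟨b, hb, hba⟩ : ∃ b ∈ B, b ≠ a := by
    by_contra! hB_sub
    have := hB_sub _ (hmax (a + 2) fun b hb => by rw [hB_sub b hb]; omega)
    omega
  refine Cardinal.mk_set_eq_nat_iff_finset.2 ⟨{a, b}, ?_, Finset.card_pair hba.symm⟩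
  ext x
  simp only [Finset.coe_insert, Finset.coe_singleton, Set.mem_insert_iff,
    Set.mem_singleton_iff]
  refine ⟨by rintro (rfl | rfl) <;> assumption, fun hx => ?_⟩
  have := hdirect x hx a ha
  have := hdirect x hx b hb
  have := hdirect b hb a ha
  omega

theorem exists_ne_ne_of_isSubfactor_squares_one {B : Set ℤ} (hB : IsSubfactor (Squares 1) B)
    {a b : ℤ} (ha : a ∈ B) (hb : b ∈ B) : ∃ c ∈ B, c ≠ a ∧ c ≠ b := by
  obtain ⟨hdirect, hmax⟩ := isSubfactor_iff.1 hB
  have hba := isDirectSum_iff.1 hdirect b hb a ha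
  by_contra! hB_sub
  have key : ∀ x, x - a ∉ Squares 1 - Squares 1 → x - b ∉ Squares 1 - Squares 1 →
      x = a ∨ x = b := by
    intro x hxa hxb
    by_contra! hx
    refine hx.2 (hB_sub x (hmax x fun c hc hxc => ?_) hx.1)
    rcases eq_or_ne c a with rfl | hca
    · exact absurd hxc hxa
    · rw [hB_sub c hc hca] at hxc
      exact absurd hxc hxb
  simp only [mem_sub_squares_one_iff] at hba key
  -- whatever `b - a` is, one of `a - 2`, `a + 2`, `b + 4` differs admissibly from both
  have := key (a - 2)
  have := key (a + 2)
  have := key (b + 4)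
  omega

theorem three_le_mk_of_ne {α : Type*} {s : Set α} {a b c : α} (ha : a ∈ s) (hb : b ∈ s)
    (hc : c ∈ s) (hab : a ≠ b) (hac : a ≠ c) (hbc : b ≠ c) : 3 ≤ Cardinal.mk s := by
  classical
  refine Cardinal.le_mk_iff_exists_subset.2 ⟨{a, b, c}, by simp [Set.insert_subset_iff, *], ?_⟩
  exact Cardinal.mk_set_eq_nat_iff_finset.2
    ⟨{a, b, c}, by simp, Finset.card_eq_three.2 ⟨a, b, c, hab, hac, hbc, rfl⟩⟩

theorem not_five_subset_of_isDirectSum_squares_one {B : Set ℤ}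
    (hB : IsDirectSum (Squares 1) B) {a b c d e : ℤ}
    (hab : a < b) (hbc : b < c) (hcd : c < d) (hde : d < e) : ¬{a, b, c, d, e} ⊆ B := by
  intro hsub
  have h : ∀ x ∈ ({a, b, c, d, e} : Set ℤ), ∀ y ∈ ({a, b, c, d, e} : Set ℤ),
      x - y ∈ Squares 1 - Squares 1 → x = y := fun x hx y hy =>
    isDirectSum_iff.1 hB x (hsub hx) y (hsub hy)
  simp only [Set.mem_insert_iff, Set.mem_singleton_iff, forall_eq_or_imp, forall_eq,
    mem_sub_squares_one_iff] at h
  omega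

theorem mk_le_four_of_isDirectSum_squares_one {B : Set ℤ} (hB : IsDirectSum (Squares 1) B) :
    Cardinal.mk B ≤ 4 := by
  refine Cardinal.mk_le_iff_forall_finset_subset_card_le (n := 4) |>.2 fun s hs => ?_
  by_contra! h5
  obtain ⟨t, hts, ht⟩ := Finset.exists_subset_card_eq h5
  set f := t.orderEmbOfFin ht
  have hf : ∀ i, f i ∈ B := fun i => hs (hts (t.orderEmbOfFin_mem ht i))
  refine not_five_subset_of_isDirectSum_squares_one hB (a := f 0) (b := f 1) (c := f 2)
    (d := f 3) (e := f 4) (f.strictMono (by decide)) (f.strictMono (by decide))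
    (f.strictMono (by decide)) (f.strictMono (by decide)) ?_
  simp only [Set.insert_subset_iff, Set.singleton_subset_iff, hf, and_self]

theorem isSubfactor_squares_one_012 : IsSubfactor (Squares 1) {0, 1, 2} := by
  refine isSubfactor_iff.2 ⟨isDirectSum_iff.2 ?_, fun x hx => ?_⟩
  · simp only [Set.mem_insert_iff, Set.mem_singleton_iff, mem_sub_squares_one_iff]
    rintro b₁ (rfl | rfl | rfl) b₂ (rfl | rfl | rfl) <;> omega
  · simp only [Set.mem_insert_iff, Set.mem_singleton_iff, forall_eq_or_imp, forall_eq,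
      mem_sub_squares_one_iff] at hx ⊢
    omega

theorem isSubfactor_squares_one_0246 : IsSubfactor (Squares 1) {0, 2, 4, 6} := by
  refine isSubfactor_iff.2 ⟨isDirectSum_iff.2 ?_, fun x hx => ?_⟩
  · simp only [Set.mem_insert_iff, Set.mem_singleton_iff, mem_sub_squares_one_iff]
    rintro b₁ (rfl | rfl | rfl | rfl) b₂ (rfl | rfl | rfl | rfl) <;> omega
  · simp only [Set.mem_insert_iff, Set.mem_singleton_iff, forall_eq_or_imp, forall_eq,
      mem_sub_squares_one_iff] at hx ⊢
    omega

theorem lowerIndex_squares_one : lowerIndex (Squares 1) = 3 := by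
  refine IsLeast.csInf_eq ⟨⟨{0, 1, 2}, isSubfactor_squares_one_012, by simp⟩, ?_⟩
  rintro _ ⟨B, hB, rfl⟩
  obtain ⟨a, ha⟩ := hB.nonempty
  obtain ⟨b, hb, hba, -⟩ := exists_ne_ne_of_isSubfactor_squares_one hB ha ha
  obtain ⟨c, hc, hca, hcb⟩ := exists_ne_ne_of_isSubfactor_squares_one hB ha hb
  exact three_le_mk_of_ne ha hb hc hba.symm hca.symm hcb.symm

theorem upperIndex_squares_one : upperIndex (Squares 1) = 4 := by
  refine IsGreatest.csSup_eq ⟨⟨{0, 2, 4, 6}, isSubfactor_squares_one_0246, by simp⟩, ?_⟩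
  rintro _ ⟨B, hB, rfl⟩
  exact mk_le_four_of_isDirectSum_squares_one hB.1

theorem stmt18 (n₀ : ℕ) :
    (Squares 0 - Squares 0)ᶜ = {x : ℤ | ∃ k : ℤ, x = 4 * k + 2} ∧
    (0 < n₀ → (Squares n₀ - Squares n₀)ᶜ =
      {x : ℤ | ∃ k : ℤ, x = 4 * k + 2} ∪
      {x : ℤ | ∃ j : ℤ, 1 ≤ j ∧ j ≤ (n₀ : ℤ) ∧ (x = 2 * j - 1 ∨ x = -(2 * j - 1))} ∪
      {x : ℤ | ∃ j : ℤ, 1 ≤ j ∧ j ≤ (n₀ : ℤ) ∧ (x = 4 * j ∨ x = -(4 * j))}) ∧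
    (∀ B : Set ℤ, IsSubfactor (Squares 0) B → Cardinal.mk ↥B = 2) ∧
    lowerIndex (Squares 1) = 3 ∧
    upperIndex (Squares 1) = 4 :=
  ⟨compl_sub_squares_zero, fun _ => compl_sub_squares n₀,
    fun _ => mk_eq_two_of_isSubfactor_squares_zero, lowerIndex_squares_one,
    upperIndex_squares_one⟩
end

section
/- Let F = {F_n : n ≥ 1} be the set of Fibonacci numbers (F_1 = F_2 = 1, F_n = F_{n−1} + F_{n−2}) in the additive group ℤ. Then the difference set F − F is not syndetic in ℤ: for every L there exists k such that the interval (F_k, F_k + L] contains no element of F − F. Consequently F is index stable in ℤ with index ℵ₀, i.e., every subfactor of ℤ relative to F is countably infinite. -/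
open Pointwise

/-- A subset `S` of `(ℤ,+)` is syndetic if `S + F = ℤ` for some finite `F`. -/
def Syndetic (S : Set ℤ) : Prop :=
  ∃ F : Finset ℤ, S + (F : Set ℤ) = Set.univ

/-- The set of Fibonacci numbers `F_n` for `n ≥ 1`, inside `ℤ`. -/
def FibSet : Set ℤ := {x : ℤ | ∃ n : ℕ, 1 ≤ n ∧ x = (Nat.fib n : ℤ)}

/-!
Differences of Fibonacci numbers have growing gaps: a difference `F_m - F_n` exceeding `F_k`
is already at least `F_k + F_{k-3}` (attained by `F_{k+1} - F_{k-2}`), so `F - F` misses arbitrarily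
long intervals and is not syndetic. For a subfactor `B` relative to a nonempty `A`, maximality
gives `(A - A) + B = ℤ`; hence `B` finite would make `A - A` syndetic, so `B` is countably infinite.
-/

open Nat in
lemma fib_add_fib_add_le_of_lt {j n m : ℕ} (h : fib n + fib (j + 3) < fib m) :
    fib n + fib (j + 3) + fib j ≤ fib m := by
  have hjm : j + 3 < m := fib_mono.reflect_lt (by omega)
  have hnm : n < m := fib_mono.reflect_lt (by omega)
  have h4 : fib (j + 4) = fib (j + 2) + fib (j + 3) := fib_add_two
  have h2 : fib (j + 2) = fib j + fib (j + 1) := fib_add_two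
  obtain rfl | hm : m = j + 4 ∨ j + 5 ≤ m := by omega
  · have hn : n < j + 2 := fib_mono.reflect_lt (by omega)
    have := fib_mono (show n ≤ j + 1 by omega)
    omega
  obtain ⟨p, rfl⟩ : ∃ p, m = p + 2 := ⟨m - 2, by omega⟩
  have hp : fib (p + 2) = fib p + fib (p + 1) := fib_add_two
  obtain hn | rfl : n ≤ p ∨ n = p + 1 := by omega
  · have := fib_mono hn
    have : fib (j + 4) ≤ fib (p + 1) := fib_mono (by omega)
    omega
  · have : fib (j + 4) ≤ fib p := fib_mono <| fib_mono.reflect_lt (by omega)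
    omega

lemma fibSet_sub_fibSet_gap {j : ℕ} {d : ℤ} (hd : d ∈ FibSet - FibSet)
    (hlt : (Nat.fib (j + 3) : ℤ) < d) : (Nat.fib (j + 3) : ℤ) + Nat.fib j ≤ d := by
  obtain ⟨_, ⟨m, -, rfl⟩, _, ⟨n, -, rfl⟩, rfl⟩ := Set.mem_sub.mp hd
  have := @fib_add_fib_add_le_of_lt j n m (by omega)
  omega

lemma exists_gap_fibSet_sub_fibSet (L : ℤ) : ∃ k : ℕ, ∀ d ∈ FibSet - FibSet,
    ¬ ((Nat.fib k : ℤ) < d ∧ d ≤ (Nat.fib k : ℤ) + L) := by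
  refine ⟨L.toNat + 5 + 3, fun d hd ⟨hlt, hle⟩ => ?_⟩
  have := fibSet_sub_fibSet_gap hd hlt
  have : L.toNat + 5 ≤ Nat.fib (L.toNat + 5) := Nat.le_fib_self (by omega)
  omega

lemma not_syndetic_of_forall_exists_gap {S : Set ℤ}
    (h : ∀ L : ℤ, ∃ x : ℤ, ∀ d ∈ S, ¬ (x < d ∧ d ≤ x + L)) : ¬ Syndetic S := by
  rintro ⟨F, hF⟩
  let R : ℕ := F.sup Int.natAbs
  obtain ⟨x, hx⟩ := h (2 * R + 1)
  obtain ⟨d, hd, f, hf, hdf⟩ := Set.mem_add.mp (hF ▸ Set.mem_univ (x + R + 1))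
  have : f.natAbs ≤ R := Finset.le_sup (f := Int.natAbs) hf
  exact hx d hd ⟨by omega, by omega⟩

lemma mem_sub_add_of_not_isDirectSum_insert {A B : Set ℤ} {z : ℤ} (hB : IsDirectSum A B)
    (hz : ¬ IsDirectSum A (insert z B)) : z ∈ A - A + B := by
  simp only [IsDirectSum, not_forall] at hz
  obtain ⟨a₁, ha₁, b₁, hb₁, a₂, ha₂, b₂, hb₂, heq, hne⟩ := hz
  rcases hb₁ with rfl | hb₁ <;> rcases hb₂ with rfl | hb₂
  · omega
  · exact Set.mem_add.mpr ⟨a₂ - a₁, Set.mem_sub.mpr ⟨a₂, ha₂, a₁, ha₁, rfl⟩, b₂, hb₂, by omega⟩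
  · exact Set.mem_add.mpr ⟨a₁ - a₂, Set.mem_sub.mpr ⟨a₁, ha₁, a₂, ha₂, rfl⟩, b₁, hb₁, by omega⟩
  · exact (hne (hB a₁ ha₁ b₁ hb₁ a₂ ha₂ b₂ hb₂ heq)).elim

lemma IsSubfactor.sub_add_eq_univ {A B : Set ℤ} (hB : IsSubfactor A B) (hA : A.Nonempty) :
    A - A + B = Set.univ := by
  refine Set.eq_univ_of_forall fun z => ?_
  by_cases hzB : z ∈ B
  · obtain ⟨a, ha⟩ := hA
    exact Set.mem_add.mpr ⟨0, Set.mem_sub.mpr ⟨a, ha, a, ha, sub_self a⟩, z, hzB, zero_add z⟩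
  · refine mem_sub_add_of_not_isDirectSum_insert hB.1 fun hdir => hzB ?_
    exact hB.2 _ (Set.subset_insert z B) hdir ▸ Set.mem_insert z B

lemma IsSubfactor.infinite {A B : Set ℤ} (hB : IsSubfactor A B) (hA : A.Nonempty)
    (hsynd : ¬ Syndetic (A - A)) : B.Infinite := fun hfin =>
  hsynd ⟨hfin.toFinset, by rw [Set.Finite.coe_toFinset]; exact hB.sub_add_eq_univ hA⟩

theorem stmt19 :
    (∀ L : ℤ, ∃ k : ℕ, ∀ d ∈ FibSet - FibSet,
      ¬ ((Nat.fib k : ℤ) < d ∧ d ≤ (Nat.fib k : ℤ) + L)) ∧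
    ¬ Syndetic (FibSet - FibSet) ∧
    (∀ B : Set ℤ, IsSubfactor FibSet B → Cardinal.mk ↥B = Cardinal.aleph0) := by
  have hsynd : ¬ Syndetic (FibSet - FibSet) := not_syndetic_of_forall_exists_gap fun L => by
    obtain ⟨k, hk⟩ := exists_gap_fibSet_sub_fibSet L
    exact ⟨_, hk⟩
  have hne : FibSet.Nonempty := ⟨1, 1, le_rfl, by simp⟩
  refine ⟨exists_gap_fibSet_sub_fibSet, hsynd, fun B hB => ?_⟩
  have := (hB.infinite hne hsynd).to_subtype
  exact Cardinal.mk_eq_aleph0 B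
end
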